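/- arXiv:1806.09357 — 2 statements merged into one kernel-verified Lean document; each statement's English description precedes it below -/
import Mathlib

section
/- Let G be a finite simple graph, f : V(G) → ℤ⁺ a function, S a nonempty subset of V(G), and F a spanning subgraph of G such that every vertex v outside S has odd degree in F. Then the number of odd components of G - S is at most the number of edges of F joining S to V(G) \ S, which is at most the sum over v in S of deg_F(v). In particular, if deg_F(v) ≤ f(v) for all v ∈ S, then o(G - S) ≤ Σ_{v∈S} f(v). -/
open SimpleGraph

/-- Degree of `v` in graph `F` (no decidability assumptions). -/
noncomputable def fdeg {V : Type*} (F : SimpleGraph V) (v : V) : ℕ :=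
  Nat.card (F.neighborSet v)

/-- Number of odd components of `G - S`. -/
noncomputable def oddComp {V : Type*} [Fintype V] (G : SimpleGraph V) (S : Set V) : ℕ :=
  Nat.card {c : (G.induce (Sᶜ : Set V)).ConnectedComponent // Odd (Nat.card c.supp)}

/-- The set `J_f(v)`: odd numbers at most `f v`, together with `f v` itself. -/
def Jf {V : Type*} (f : V → ℕ) (v : V) : Set ℕ := {m | Odd m ∧ m ≤ f v} ∪ {f v}

/-- The set `J_f⁺(v)`: odd numbers at most `f v + 1`. -/
def Jfp {V : Type*} (f : V → ℕ) (v : V) : Set ℕ := {m | Odd m ∧ m ≤ f v + 1}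

/-!
An odd component `C` of `G - S` has an odd number of vertices, all of odd degree in `F`, so by the
handshake lemma some `F`-edge leaves `C`; as `F ≤ G`, it cannot end in another component, so it
ends in `S`. One such edge per odd component gives an injection into the `F`-edges crossing `S`,
and each crossing edge is counted by the `F`-degree of its endpoint in `S`.
-/

namespace SimpleGraph

variable {V : Type*}

lemma fdeg_eq_degree (F : SimpleGraph V) (v : V) [Fintype (F.neighborSet v)] :
    fdeg F v = F.degree v := by
  rw [fdeg, Nat.card_eq_fintype_card, card_neighborSet_eq_degree]

-- If no edge left `T`, all of `T` would have odd degree in `F.induce T`, against the handshake lemma.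
lemma exists_adj_notMem_of_odd_card [Fintype V] (F : SimpleGraph V) (T : Set V)
    (hT : Odd (Nat.card T)) (hdeg : ∀ v ∈ T, Odd (fdeg F v)) :
    ∃ v ∈ T, ∃ w ∉ T, F.Adj v w := by
  classical
  by_contra! hclosed
  have hdegT : ∀ v : T, Odd ((F.induce T).degree v) := fun v => by
    rw [degree_induce_of_neighborSet_subset fun w hw => by_contra fun hwT => hclosed v v.2 w hwT hw,
      ← fdeg_eq_degree]
    exact hdeg v v.2
  have heven := (F.induce T).even_card_odd_degree_vertices
  rw [Finset.filter_true_of_mem fun v _ => hdegT v, Finset.card_univ,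
    ← Nat.card_eq_fintype_card] at heven
  exact Nat.not_even_iff_odd.2 hT heven

lemma ConnectedComponent.mem_image_supp_of_adj {G : SimpleGraph V} {S : Set V}
    {c : (G.induce Sᶜ).ConnectedComponent} {v w : V} (hv : v ∈ Subtype.val '' c.supp)
    (hw : w ∉ S) (hadj : G.Adj v w) : w ∈ Subtype.val '' c.supp := by
  obtain ⟨v, hvc, rfl⟩ := hv
  exact ⟨⟨w, hw⟩, c.mem_supp_of_adj_mem_supp hvc (by simpa using hadj), rfl⟩

def crossEdges (F : SimpleGraph V) (S : Set V) : Set (Sym2 V) :=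
  {e ∈ F.edgeSet | ∃ v w, e = s(v, w) ∧ v ∈ S ∧ w ∉ S}

variable {G F : SimpleGraph V} {S : Set V}

lemma exists_adj_mem_of_odd_card_supp [Fintype V] (hFG : F ≤ G)
    (hdeg : ∀ v ∉ S, Odd (fdeg F v)) {c : (G.induce Sᶜ).ConnectedComponent}
    (hc : Odd (Nat.card c.supp)) : ∃ w ∈ c.supp, ∃ v ∈ S, F.Adj w v := by
  obtain ⟨_, ⟨w, hwc, rfl⟩, v, hvc, hadj⟩ :=
    F.exists_adj_notMem_of_odd_card (Subtype.val '' c.supp)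
      (by rwa [Nat.card_image_of_injective Subtype.val_injective])
      (by rintro _ ⟨w, -, rfl⟩; exact hdeg w w.2)
  refine ⟨w, hwc, v, ?_, hadj⟩
  by_contra hvS
  exact hvc (c.mem_image_supp_of_adj ⟨w, hwc, rfl⟩ hvS (hFG hadj))

-- The chosen edge remembers its component through its endpoint outside `S`.
lemma oddComp_le_card_crossEdges [Fintype V] (hFG : F ≤ G) (hdeg : ∀ v ∉ S, Odd (fdeg F v)) :
    oddComp G S ≤ Nat.card (crossEdges F S) := by
  choose w hwc v hvS hadj using fun c : {c : (G.induce Sᶜ).ConnectedComponent //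
    Odd (Nat.card c.supp)} => exists_adj_mem_of_odd_card_supp hFG hdeg c.2
  refine Nat.card_le_card_of_injective
    (fun c => ⟨s(v c, w c), (hadj c).symm, v c, w c, rfl, hvS c, (w c).2⟩) fun c c' h => ?_
  rcases Sym2.eq_iff.1 (congrArg Subtype.val h) with ⟨-, hw⟩ | ⟨hvw, -⟩
  · exact Subtype.ext <| ConnectedComponent.eq_of_common_vertex (hwc c) (Subtype.ext hw ▸ hwc c')
  · exact absurd (hvw ▸ hvS c) (w c').2

lemma card_crossEdges_le_sum_fdeg [F.LocallyFinite] (S : Finset V) :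
    Nat.card (crossEdges F S) ≤ ∑ v ∈ S, fdeg F v := by
  choose ψ hψ using fun e : crossEdges F S =>
    show ∃ p : Σ v : S, F.neighborSet v, s(p.1.1, p.2.1) = e.1 by
      obtain ⟨_, he, v, w, rfl, hv, -⟩ := e
      exact ⟨⟨⟨v, hv⟩, ⟨w, he⟩⟩, rfl⟩
  calc Nat.card (crossEdges F S) ≤ Nat.card (Σ v : S, F.neighborSet v) :=
        Nat.card_le_card_of_injective ψ fun e e' h => Subtype.ext (by rw [← hψ e, ← hψ e', h])
    _ = ∑ v ∈ S, fdeg F v := by rw [Nat.card_sigma, ← Finset.sum_coe_sort S]; rfl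

end SimpleGraph

theorem odd_components_bound_general {V : Type*} [Fintype V] (G F : SimpleGraph V)
    (hFG : F ≤ G) (f : V → ℕ)
    (S : Finset V)
    (hdeg : ∀ v : V, v ∉ S → Odd (fdeg F v)) :
    oddComp G ↑S ≤
        Nat.card {e : Sym2 V // e ∈ F.edgeSet ∧
          ∃ v w, e = s(v, w) ∧ v ∈ S ∧ w ∉ S} ∧
      Nat.card {e : Sym2 V // e ∈ F.edgeSet ∧
          ∃ v w, e = s(v, w) ∧ v ∈ S ∧ w ∉ S} ≤ ∑ v ∈ S, fdeg F v ∧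
      ((∀ v ∈ S, fdeg F v ≤ f v) → oddComp G ↑S ≤ ∑ v ∈ S, f v) := by
  classical
  have hodd : oddComp G S ≤ Nat.card (crossEdges F S) := oddComp_le_card_crossEdges hFG hdeg
  have hcross : Nat.card (crossEdges F S) ≤ ∑ v ∈ S, fdeg F v := card_crossEdges_le_sum_fdeg S
  exact ⟨hodd, hcross, fun hle => (hodd.trans hcross).trans (Finset.sum_le_sum hle)⟩

theorem odd_components_bound {V : Type*} [Fintype V] (G F : SimpleGraph V)
    (hFG : F ≤ G) (f : V → ℕ) (hf : ∀ v, 0 < f v)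
    (S : Finset V) (hS : S.Nonempty)
    (hdeg : ∀ v : V, v ∉ S → Odd (fdeg F v)) :
    oddComp G ↑S ≤
        Nat.card {e : Sym2 V // e ∈ F.edgeSet ∧
          ∃ v w, e = s(v, w) ∧ v ∈ S ∧ w ∉ S} ∧
      Nat.card {e : Sym2 V // e ∈ F.edgeSet ∧
          ∃ v w, e = s(v, w) ∧ v ∈ S ∧ w ∉ S} ≤ ∑ v ∈ S, fdeg F v ∧
      ((∀ v ∈ S, fdeg F v ≤ f v) → oddComp G ↑S ≤ ∑ v ∈ S, f v) :=
  odd_components_bound_general G F hFG f S hdeg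
end

section
/- Let G be a connected finite simple graph of even order and f : V(G) → ℤ⁺. If G contains, for every H : V(G) → 2^ℕ with H(v) ∈ {J_f(v), J_f⁺(v)}, an H-factor, then for every nonempty S ⊆ V(G), o(G - S) ≤ Σ_{v∈S} f(v). (Sufficiency direction of the main theorem, proved by choosing H(v) = J_f(v) on S and H(v) = J_f⁺(v) off S, and counting edges from odd components into S.) -/
/-!
Put `H v = J_f(v)` on `S` and `H v = J_f⁺(v)` off `S`, and let `F ≤ G` be an `H`-factor. Every
vertex outside `S` then has odd `F`-degree, so by the handshake lemma no odd component of `G - S`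
can be closed under `F`-adjacency: each one receives an `F`-edge from `S`. Choosing one such
edge per odd component is injective, hence `o(G - S) ≤ ∑_{s ∈ S} deg_F s ≤ ∑_{s ∈ S} f s`.
-/

open SimpleGraph

section

variable {V : Type*}

lemma fdeg_eq_degree [Fintype V] (F : SimpleGraph V) [DecidableRel F.Adj] (v : V) :
    fdeg F v = F.degree v := by
  rw [fdeg, Nat.card_eq_fintype_card, card_neighborSet_eq_degree]

lemma fdeg_induce_of_closed (F : SimpleGraph V) {T : Set V}
    (hT : ∀ v ∈ T, ∀ w, F.Adj v w → w ∈ T) (v : T) :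
    fdeg (F.induce T) v = fdeg F v :=
  Nat.card_congr
    { toFun := fun w => ⟨w.1.1, w.2⟩
      invFun := fun w => ⟨⟨w.1, hT v v.2 w.1 w.2⟩, w.2⟩
      left_inv := fun _ => rfl
      right_inv := fun _ => rfl }

lemma even_card_of_closed_of_odd_fdeg [Finite V] (F : SimpleGraph V) {T : Set V}
    (hT : ∀ v ∈ T, ∀ w, F.Adj v w → w ∈ T) (hodd : ∀ v ∈ T, Odd (fdeg F v)) :
    Even (Nat.card T) := by
  classical
  have : Fintype T := Fintype.ofFinite T
  have handshake := (F.induce T).even_card_odd_degree_vertices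
  have hall : ∀ v : T, Odd ((F.induce T).degree v) := fun v => by
    rw [← fdeg_eq_degree, fdeg_induce_of_closed F hT]
    exact hodd v v.2
  simpa [hall, Nat.card_eq_fintype_card] using handshake

lemma exists_adj_of_odd_card_supp [Finite V] {G F : SimpleGraph V} (hFG : F ≤ G) {S : Set V}
    (hodd : ∀ v ∉ S, Odd (fdeg F v)) (c : (G.induce Sᶜ).ConnectedComponent)
    (hc : Odd (Nat.card c.supp)) :
    ∃ s ∈ S, ∃ v : (Sᶜ : Set V), v ∈ c.supp ∧ F.Adj s v := by
  by_contra! hnone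
  set T : Set V := Subtype.val '' c.supp
  have hclosed : ∀ v ∈ T, ∀ w, F.Adj v w → w ∈ T := by
    rintro _ ⟨v, hvc, rfl⟩ w hvw
    have hw : w ∈ Sᶜ := fun hwS => hnone w hwS v hvc hvw.symm
    have hreach : (G.induce Sᶜ).Reachable ⟨w, hw⟩ v := Adj.reachable (hFG hvw.symm)
    exact ⟨⟨w, hw⟩, (c.mem_supp_iff _).mpr ((ConnectedComponent.sound hreach).trans hvc), rfl⟩
  have heven := even_card_of_closed_of_odd_fdeg F hclosed (by
    rintro _ ⟨v, -, rfl⟩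
    exact hodd v v.2)
  rw [Nat.card_image_of_injective Subtype.val_injective] at heven
  exact Nat.not_even_iff_odd.mpr hc heven

lemma oddComp_le_sum_fdeg [Fintype V] {G F : SimpleGraph V} (hFG : F ≤ G) (S : Finset V)
    (hodd : ∀ v ∉ S, Odd (fdeg F v)) :
    oddComp G S ≤ ∑ s ∈ S, fdeg F s := by
  choose s hsS v hvc hadj using fun c : {c : (G.induce (S : Set V)ᶜ).ConnectedComponent //
    Odd (Nat.card c.supp)} => exists_adj_of_odd_card_supp hFG (S := S) (by simpa using hodd) c.1 c.2
  let edge : {c : (G.induce (S : Set V)ᶜ).ConnectedComponent // Odd (Nat.card c.supp)} →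
      Σ x : S, F.neighborSet x := fun c => ⟨⟨s c, hsS c⟩, ⟨v c, hadj c⟩⟩
  have hedge : Function.Injective edge := by
    refine Function.Injective.of_comp (f := fun e => (e.2 : V)) fun c₁ c₂ h => Subtype.ext ?_
    have hv : v c₁ = v c₂ := Subtype.ext h
    rw [← (c₁.1.mem_supp_iff _).mp (hvc c₁), ← (c₂.1.mem_supp_iff _).mp (hvc c₂), hv]
  calc oddComp G S
      ≤ Nat.card (Σ x : S, F.neighborSet x) := Nat.card_le_card_of_injective edge hedge
    _ = ∑ x : S, fdeg F x := by
        classical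
        simp only [Nat.card_sigma, fdeg]
    _ = ∑ s ∈ S, fdeg F s := Finset.sum_coe_sort S (fdeg F)

lemma le_of_mem_Jf {f : V → ℕ} {v : V} {m : ℕ} (hm : m ∈ Jf f v) : m ≤ f v := by
  rcases hm with hm | rfl
  exacts [hm.2, le_rfl]

lemma odd_of_mem_Jfp {f : V → ℕ} {v : V} {m : ℕ} (hm : m ∈ Jfp f v) : Odd m :=
  hm.1

end

theorem main_sufficiency_general {V : Type*} [Fintype V] (G : SimpleGraph V)
    (f : V → ℕ)
    (h : ∀ H : V → Set ℕ, (∀ v, H v = Jf f v ∨ H v = Jfp f v) →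
      ∃ F : SimpleGraph V, F ≤ G ∧ ∀ v, fdeg F v ∈ H v) :
    ∀ S : Finset V, S.Nonempty → oddComp G ↑S ≤ ∑ v ∈ S, f v := by
  intro S _
  classical
  obtain ⟨F, hFG, hF⟩ := h (fun v => if v ∈ S then Jf f v else Jfp f v)
    fun v => by split_ifs <;> simp
  calc oddComp G S
      ≤ ∑ v ∈ S, fdeg F v :=
        oddComp_le_sum_fdeg hFG S fun v hv => odd_of_mem_Jfp (by simpa [hv] using hF v)
    _ ≤ ∑ v ∈ S, f v :=
        Finset.sum_le_sum fun v hv => le_of_mem_Jf (by simpa [hv] using hF v)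

theorem main_sufficiency {V : Type*} [Fintype V] (G : SimpleGraph V)
    (hG : G.Connected) (heven : Even (Fintype.card V))
    (f : V → ℕ) (hf : ∀ v, 0 < f v)
    (h : ∀ H : V → Set ℕ, (∀ v, H v = Jf f v ∨ H v = Jfp f v) →
      ∃ F : SimpleGraph V, F ≤ G ∧ ∀ v, fdeg F v ∈ H v) :
    ∀ S : Finset V, S.Nonempty → oddComp G ↑S ≤ ∑ v ∈ S, f v :=
  main_sufficiency_general G f h
end
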